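/- Let α, β ∈ ℝ and let u, ψ : ℝ × ℝ → ℍ be smooth with u_t = (β − 3α²)(u²*u_x + u_x*u²) + β u*u_x*u + u_xxx (the first quaternion mKdV family) and ψ_t = α u_xx*ψ + α² [u,u_x]*ψ + (β − 2α²)α u³*ψ. Then the function φ := ψ_x − α u*ψ satisfies φ_t = α u_xx*φ + α² [u,u_x]*φ + (β − 2α²)α u³*φ. (Lax pair with K = L, i.e., all multiplications acting on the left.) -/

import Mathlib

/-- Partial derivative in `t` (the first coordinate). -/
noncomputable def pt (f : ℝ × ℝ → Quaternion ℝ) : ℝ × ℝ → Quaternion ℝ :=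
  fun p => deriv (fun s => f (s, p.2)) p.1

/-- Partial derivative in `x` (the second coordinate). -/
noncomputable def px (f : ℝ × ℝ → Quaternion ℝ) : ℝ × ℝ → Quaternion ℝ :=
  fun p => deriv (fun y => f (p.1, y)) p.2

lemma px_hasDerivAt {f : ℝ × ℝ → Quaternion ℝ} (hf : ContDiff ℝ (⊤ : ℕ∞) f) (p : ℝ × ℝ) :
    HasDerivAt (fun y => f (p.1, y)) (px f p) p.2 :=
  (((hf.comp (contDiff_const.prodMk contDiff_id)).differentiable (by simp)) p.2).hasDerivAt

lemma pt_hasDerivAt {f : ℝ × ℝ → Quaternion ℝ} (hf : ContDiff ℝ (⊤ : ℕ∞) f) (p : ℝ × ℝ) :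
    HasDerivAt (fun s => f (s, p.2)) (pt f p) p.1 :=
  (((hf.comp (contDiff_id.prodMk contDiff_const)).differentiable (by simp)) p.1).hasDerivAt

lemma px_eq {f : ℝ × ℝ → Quaternion ℝ} (hf : ContDiff ℝ (⊤ : ℕ∞) f) (p : ℝ × ℝ) :
    px f p = fderiv ℝ f p (0, 1) := by
  have hg : HasDerivAt (fun y => ((p.1 : ℝ), y)) ((0 : ℝ), (1 : ℝ)) p.2 :=
    (hasDerivAt_const _ _).prodMk (hasDerivAt_id _)
  have h1 : HasDerivAt (fun y => f (p.1, y)) (fderiv ℝ f p (0, 1)) p.2 := by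
    have h := (hf.differentiable (by simp) p).hasFDerivAt
    exact h.comp_hasDerivAt p.2 hg
  exact (px_hasDerivAt hf p).unique h1

lemma pt_eq {f : ℝ × ℝ → Quaternion ℝ} (hf : ContDiff ℝ (⊤ : ℕ∞) f) (p : ℝ × ℝ) :
    pt f p = fderiv ℝ f p (1, 0) := by
  have hg : HasDerivAt (fun s => (s, (p.2 : ℝ))) ((1 : ℝ), (0 : ℝ)) p.1 :=
    (hasDerivAt_id _).prodMk (hasDerivAt_const _ _)
  have h1 : HasDerivAt (fun s => f (s, p.2)) (fderiv ℝ f p (1, 0)) p.1 := by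
    have h := (hf.differentiable (by simp) p).hasFDerivAt
    exact h.comp_hasDerivAt p.1 hg
  exact (pt_hasDerivAt hf p).unique h1

lemma contDiff_px {f : ℝ × ℝ → Quaternion ℝ} (hf : ContDiff ℝ (⊤ : ℕ∞) f) :
    ContDiff ℝ (⊤ : ℕ∞) (px f) := by
  have : px f = fun p => fderiv ℝ f p (0, 1) := funext fun p => px_eq hf p
  rw [this]
  exact (hf.fderiv_right (by simp)).clm_apply contDiff_const

lemma pt_px_comm {f : ℝ × ℝ → Quaternion ℝ} (hf : ContDiff ℝ (⊤ : ℕ∞) f) (p : ℝ × ℝ) :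
    pt (px f) p = px (pt f) p := by
  have hdf : ContDiff ℝ (⊤ : ℕ∞) (fun q => fderiv ℝ f q) := hf.fderiv_right (by simp)
  have h2 : HasFDerivAt (fderiv ℝ f) (fderiv ℝ (fderiv ℝ f) p) p :=
    ((hdf.differentiable (by simp)) p).hasFDerivAt
  have hsymm : ∀ v w, fderiv ℝ (fderiv ℝ f) p v w = fderiv ℝ (fderiv ℝ f) p w v :=
    second_derivative_symmetric (fun y => ((hf.differentiable (by simp)) y).hasFDerivAt) h2
  have key : ∀ v w : ℝ × ℝ, fderiv ℝ (fun q => fderiv ℝ f q v) p w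
      = fderiv ℝ (fderiv ℝ f) p w v := by
    intro v w
    have h3 : HasFDerivAt (fun q => fderiv ℝ f q v)
        ((ContinuousLinearMap.apply ℝ (Quaternion ℝ) v).comp (fderiv ℝ (fderiv ℝ f) p)) p :=
      (ContinuousLinearMap.apply ℝ (Quaternion ℝ) v).hasFDerivAt.comp p h2
    rw [h3.fderiv]; rfl
  have e1 : pt (px f) p = fderiv ℝ (fderiv ℝ f) p (1,0) (0,1) := by
    have hpx : px f = fun q => fderiv ℝ f q (0,1) := funext fun q => px_eq hf q
    rw [pt_eq (contDiff_px hf) p, hpx, key]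
  have e2 : px (pt f) p = fderiv ℝ (fderiv ℝ f) p (0,1) (1,0) := by
    have hcpt : ContDiff ℝ (⊤ : ℕ∞) (pt f) := by
      have : pt f = fun q => fderiv ℝ f q (1,0) := funext fun q => pt_eq hf q
      rw [this]; exact hdf.clm_apply contDiff_const
    have hpt : pt f = fun q => fderiv ℝ f q (1,0) := funext fun q => pt_eq hf q
    rw [px_eq hcpt p, hpt, key]
  rw [e1, e2, hsymm]


set_option maxHeartbeats 1000000 in
lemma mkdv_alg_aux {R : Type} [Ring R] [Algebra ℝ R] (α β : ℝ) (U A B C P Q : R) :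
    (α • (C * P + B * Q)
      + α ^ 2 • ((A * A + U * B - (B * U + A * A)) * P + (U * A - A * U) * Q)
      + ((β - 2 * α ^ 2) * α) • (((A * U + U * A) * U + U * U * A) * P + U * U * U * Q))
    - α • (((β - 3 * α ^ 2) • (U * U * A + A * (U * U)) + β • (U * A * U) + C) * P
      + U * (α • (B * P) + α ^ 2 • ((U * A - A * U) * P)
          + ((β - 2 * α ^ 2) * α) • (U * U * U * P)))
    = α • (B * (Q - α • (U * P)))
      + α ^ 2 • ((U * A - A * U) * (Q - α • (U * P)))
      + ((β - 2 * α ^ 2) * α) • (U * U * U * (Q - α • (U * P))) := by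
  simp only [mul_add, add_mul, mul_sub, sub_mul, smul_add, smul_sub, smul_smul,
    smul_mul_assoc, mul_smul_comm, mul_assoc]
  match_scalars <;> ring

set_option maxHeartbeats 1000000 in
/-- Lax pair with `K = L` (all multiplications on the left) for the first
quaternion mKdV family. -/
theorem mkdv1_lax_left (α β : ℝ) (u ψ φ : ℝ × ℝ → Quaternion ℝ)
    (hu : ContDiff ℝ (⊤ : ℕ∞) u) (hψ : ContDiff ℝ (⊤ : ℕ∞) ψ)
    (hut : ∀ p, pt u p = (β - 3 * α ^ 2) • (u p ^ 2 * px u p + px u p * u p ^ 2)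
      + β • (u p * px u p * u p) + px (px (px u)) p)
    (hψt : ∀ p, pt ψ p = α • (px (px u) p * ψ p)
      + (α ^ 2) • ((u p * px u p - px u p * u p) * ψ p)
      + ((β - 2 * α ^ 2) * α) • (u p ^ 3 * ψ p))
    (hφ : φ = fun p => px ψ p - α • (u p * ψ p)) :
    ∀ p, pt φ p = α • (px (px u) p * φ p)
      + (α ^ 2) • ((u p * px u p - px u p * u p) * φ p)
      + ((β - 2 * α ^ 2) * α) • (u p ^ 3 * φ p) := by
  have hA : ContDiff ℝ (⊤ : ℕ∞) (px u) := contDiff_px hu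
  have hB : ContDiff ℝ (⊤ : ℕ∞) (px (px u)) := contDiff_px hA
  have hΨx : ContDiff ℝ (⊤ : ℕ∞) (px ψ) := contDiff_px hψ
  intro p
  -- Step 1: pt φ via product rule in t
  have h1 : pt φ p = pt (px ψ) p - α • (pt u p * ψ p + u p * pt ψ p) := by
    have hd : HasDerivAt (fun s => px ψ (s, p.2) - α • (u (s, p.2) * ψ (s, p.2)))
        (pt (px ψ) p - α • (pt u p * ψ p + u p * pt ψ p)) p.1 :=
      (pt_hasDerivAt hΨx p).sub (((pt_hasDerivAt hu p).mul (pt_hasDerivAt hψ p)).const_smul α)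
    have e : pt φ p = deriv (fun s => φ (s, p.2)) p.1 := rfl
    rw [e]
    simp only [hφ]
    exact hd.deriv
  -- Step 2: Clairaut
  have h2 : pt (px ψ) p = px (pt ψ) p := pt_px_comm hψ p
  -- Step 3: px of the evolution equation for ψ
  have h3 : px (pt ψ) p =
      α • (px (px (px u)) p * ψ p + px (px u) p * px ψ p)
      + α ^ 2 • ((px u p * px u p + u p * px (px u) p
            - (px (px u) p * u p + px u p * px u p)) * ψ p
          + (u p * px u p - px u p * u p) * px ψ p)
      + ((β - 2 * α ^ 2) * α) •
          (((px u p * u p + u p * px u p) * u p + u p * u p * px u p) * ψ p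
            + u p * u p * u p * px ψ p) := by
    have hfun : (fun y => pt ψ (p.1, y)) = fun y =>
        α • (px (px u) (p.1, y) * ψ (p.1, y))
        + α ^ 2 • ((u (p.1, y) * px u (p.1, y) - px u (p.1, y) * u (p.1, y)) * ψ (p.1, y))
        + ((β - 2 * α ^ 2) * α) • (u (p.1, y) * u (p.1, y) * u (p.1, y) * ψ (p.1, y)) := by
      funext y
      rw [hψt (p.1, y), pow_three']
    have hd : HasDerivAt (fun y =>
        α • (px (px u) (p.1, y) * ψ (p.1, y))
        + α ^ 2 • ((u (p.1, y) * px u (p.1, y) - px u (p.1, y) * u (p.1, y)) * ψ (p.1, y))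
        + ((β - 2 * α ^ 2) * α) • (u (p.1, y) * u (p.1, y) * u (p.1, y) * ψ (p.1, y)))
        (α • (px (px (px u)) p * ψ p + px (px u) p * px ψ p)
        + α ^ 2 • ((px u p * px u p + u p * px (px u) p
              - (px (px u) p * u p + px u p * px u p)) * ψ p
            + (u p * px u p - px u p * u p) * px ψ p)
        + ((β - 2 * α ^ 2) * α) •
            (((px u p * u p + u p * px u p) * u p + u p * u p * px u p) * ψ p
              + u p * u p * u p * px ψ p)) p.2 := by
      have hU := px_hasDerivAt hu p
      have hA' := px_hasDerivAt hA p
      have hB' := px_hasDerivAt hB p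
      have hP := px_hasDerivAt hψ p
      exact (((hB'.mul hP).const_smul α).add
        ((((hU.mul hA').sub (hA'.mul hU)).mul hP).const_smul (α ^ 2))).add
        ((((hU.mul hU).mul hU).mul hP).const_smul ((β - 2 * α ^ 2) * α))
    have e : px (pt ψ) p = deriv (fun y => pt ψ (p.1, y)) p.2 := rfl
    rw [e, hfun]
    exact hd.deriv
  rw [h1, h2, h3, hut p, hψt p]
  simp only [hφ]
  simp only [pow_two (u p), pow_three' (u p)]
  exact mkdv_alg_aux α β (u p) (px u p) (px (px u) p) (px (px (px u)) p) (ψ p) (px ψ p)
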